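/- Let (A_n)_{n≥1} be a sequence of nonzero d×d complex matrices such that P_n ≠ 0 for every n. If the sequence n ↦ P_n/‖P_n‖ converges, then there exist a nonzero row vector r ∈ ℂ^d and a sequence of positive reals (λ_n) such that r·(A_n/‖A_n‖ − λ_n I_d) → 0 as n → ∞, where I_d is the d×d identity matrix; one may take λ_n := ‖P_n‖/(‖P_{n−1}‖·‖A_n‖). -/

import Mathlib

open Filter Matrix

/-- `‖X‖`: sum of the moduli of the entries of a complex matrix. -/
noncomputable def matEntrySumNorm {d : ℕ} (M : Matrix (Fin d) (Fin d) ℂ) : ℝ :=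
  ∑ i, ∑ j, ‖M i j‖

/-- `P_n = A_1 ⋯ A_n` (ordered product), `P_0 = I`. -/
noncomputable def matProd {d : ℕ} (A : ℕ → Matrix (Fin d) (Fin d) ℂ) (n : ℕ) :
    Matrix (Fin d) (Fin d) ℂ :=
  ((List.range n).map fun i => A (i + 1)).prod

/-- The specific scalars `λ_n = ‖P_n‖/(‖P_{n−1}‖·‖A_n‖)`. -/
noncomputable def lamSeq {d : ℕ} (A : ℕ → Matrix (Fin d) (Fin d) ℂ) (n : ℕ) : ℝ :=
  matEntrySumNorm (matProd A n) /
    (matEntrySumNorm (matProd A (n - 1)) * matEntrySumNorm (A n))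

/-!
Write `Q_n = P_n / ‖P_n‖` and `B_n = A_n / ‖A_n‖`. Then `Q_{n-1} B_n = λ_n Q_n`, and
`0 < λ_n ≤ 1` for `n ≥ 1` because `‖·‖` is submultiplicative. If `Q_n → Q`, then
`Q B_n - λ_n Q = (Q - Q_{n-1}) B_n + λ_n (Q_n - Q) → 0`, since `B_n` and `λ_n` are bounded.
Finally `‖Q‖ = 1`, so `Q` has a nonzero row `r`, and `r (B_n - λ_n I)` is that row of
`Q B_n - λ_n Q`.
-/

open Topology

theorem tendsto_mul_sub_smul_of_mul_eq_smul {R : Type*} [SeminormedRing R] [NormedSpace ℝ R]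
    {q b : ℕ → R} {c : ℕ → ℝ} {q₀ : R} (hq : Tendsto q atTop (𝓝 q₀))
    (hb : IsBoundedUnder (· ≤ ·) atTop (norm ∘ b)) (hc : IsBoundedUnder (· ≤ ·) atTop (norm ∘ c))
    (hqb : ∀ n, q n * b (n + 1) = c (n + 1) • q (n + 1)) :
    Tendsto (fun n => q₀ * b n - c n • q₀) atTop (𝓝 0) := by
  rw [← tendsto_add_atTop_iff_nat 1]
  have hsplit : ∀ n, q₀ * b (n + 1) - c (n + 1) • q₀ =
      (q₀ - q n) * b (n + 1) + c (n + 1) • (q (n + 1) - q₀) := fun n => by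
    rw [sub_mul, smul_sub, ← hqb]; abel
  have hq_sub : Tendsto (fun n => q₀ - q n) atTop (𝓝 0) := by
    simpa using hq.const_sub q₀
  have hq_succ_sub : Tendsto (fun n => q (n + 1) - q₀) atTop (𝓝 0) :=
    tendsto_sub_nhds_zero_iff.mpr (hq.comp (tendsto_add_atTop_nat 1))
  have hb_succ : IsBoundedUnder (· ≤ ·) atTop (norm ∘ fun n => b (n + 1)) :=
    hb.mono (f := map (· + 1) atTop) (tendsto_add_atTop_nat 1)
  have hc_succ : IsBoundedUnder (· ≤ ·) atTop (norm ∘ fun n => c (n + 1)) :=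
    hc.mono (f := map (· + 1) atTop) (tendsto_add_atTop_nat 1)
  simpa only [hsplit, add_zero] using
    (hq_sub.zero_mul_isBoundedUnder_le hb_succ).add (hc_succ.smul_tendsto_zero hq_succ_sub)

section MatEntrySumNorm

variable {d : ℕ}

lemma sum_norm_row_le_matEntrySumNorm (M : Matrix (Fin d) (Fin d) ℂ) (i : Fin d) :
    ∑ j, ‖M i j‖ ≤ matEntrySumNorm M :=
  Finset.single_le_sum (f := fun i => ∑ j, ‖M i j‖) (fun _ _ => by positivity) (Finset.mem_univ i)

lemma norm_entry_le_matEntrySumNorm (M : Matrix (Fin d) (Fin d) ℂ) (i j : Fin d) :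
    ‖M i j‖ ≤ matEntrySumNorm M :=
  (Finset.single_le_sum (fun _ _ => norm_nonneg _) (Finset.mem_univ j)).trans
    (sum_norm_row_le_matEntrySumNorm M i)

lemma matEntrySumNorm_pos {M : Matrix (Fin d) (Fin d) ℂ} (h : M ≠ 0) : 0 < matEntrySumNorm M := by
  obtain ⟨i, j, hij⟩ : ∃ i j, M i j ≠ 0 := by simpa [← Matrix.ext_iff] using h
  exact (norm_pos_iff.mpr hij).trans_le (norm_entry_le_matEntrySumNorm M i j)

lemma matEntrySumNorm_smul (c : ℝ) (M : Matrix (Fin d) (Fin d) ℂ) :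
    matEntrySumNorm (c • M) = |c| * matEntrySumNorm M := by
  simp [matEntrySumNorm, Finset.mul_sum]

lemma matEntrySumNorm_mul_le (M N : Matrix (Fin d) (Fin d) ℂ) :
    matEntrySumNorm (M * N) ≤ matEntrySumNorm M * matEntrySumNorm N := by
  calc matEntrySumNorm (M * N) ≤ ∑ i, ∑ j, ∑ k, ‖M i k‖ * ‖N k j‖ := by
        unfold matEntrySumNorm
        gcongr with i _ j _
        rw [mul_apply]
        exact (norm_sum_le _ _).trans_eq (by simp only [norm_mul])
    _ = ∑ i, ∑ k, ‖M i k‖ * ∑ j, ‖N k j‖ := by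
        simp_rw [Finset.mul_sum]; exact Finset.sum_congr rfl fun i _ => Finset.sum_comm
    _ ≤ ∑ i, ∑ k, ‖M i k‖ * matEntrySumNorm N := by
        gcongr with i _ k _; exact sum_norm_row_le_matEntrySumNorm N k
    _ = matEntrySumNorm M * matEntrySumNorm N := by
        simp only [matEntrySumNorm, Finset.sum_mul]

lemma continuous_matEntrySumNorm : Continuous (matEntrySumNorm (d := d)) := by
  unfold matEntrySumNorm; fun_prop

attribute [local instance] Matrix.linftyOpNormedRing in
lemma linfty_opNorm_le_matEntrySumNorm (M : Matrix (Fin d) (Fin d) ℂ) :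
    ‖M‖ ≤ matEntrySumNorm M := by
  rw [linfty_opNorm_def]
  calc _ ≤ ((∑ i, ∑ j, ‖M i j‖₊ : NNReal) : ℝ) := NNReal.coe_le_coe.mpr <|
        Finset.sup_le fun i _ => Finset.single_le_sum (f := fun i => ∑ j, ‖M i j‖₊)
          (fun _ _ => zero_le) (Finset.mem_univ i)
    _ = matEntrySumNorm M := by simp [matEntrySumNorm]

noncomputable def matNormalize (M : Matrix (Fin d) (Fin d) ℂ) : Matrix (Fin d) (Fin d) ℂ :=
  (matEntrySumNorm M)⁻¹ • M

lemma matEntrySumNorm_matNormalize {M : Matrix (Fin d) (Fin d) ℂ} (h : M ≠ 0) :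
    matEntrySumNorm (matNormalize M) = 1 := by
  rw [matNormalize, matEntrySumNorm_smul, abs_inv, abs_of_pos (matEntrySumNorm_pos h),
    inv_mul_cancel₀ (matEntrySumNorm_pos h).ne']

lemma matEntrySumNorm_matNormalize_le_one (M : Matrix (Fin d) (Fin d) ℂ) :
    matEntrySumNorm (matNormalize M) ≤ 1 := by
  have hM : 0 ≤ matEntrySumNorm M := by unfold matEntrySumNorm; positivity
  rw [matNormalize, matEntrySumNorm_smul, abs_inv, abs_of_nonneg hM]
  exact inv_mul_le_one_of_le₀ le_rfl hM

end MatEntrySumNorm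

section MatProd

variable {d : ℕ} {A : ℕ → Matrix (Fin d) (Fin d) ℂ}

lemma matProd_succ (n : ℕ) :
    matProd A (n + 1) = matProd A n * A (n + 1) := by
  simp [matProd, List.range_succ]

lemma lamSeq_pos (hA : ∀ n, A n ≠ 0) (hP : ∀ n, matProd A n ≠ 0) (n : ℕ) : 0 < lamSeq A n :=
  div_pos (matEntrySumNorm_pos (hP n))
    (mul_pos (matEntrySumNorm_pos (hP (n - 1))) (matEntrySumNorm_pos (hA n)))

lemma lamSeq_succ_le_one {n : ℕ} (hP : matProd A n ≠ 0) (hA : A (n + 1) ≠ 0) :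
    lamSeq A (n + 1) ≤ 1 := by
  rw [lamSeq, Nat.add_sub_cancel,
    div_le_one (mul_pos (matEntrySumNorm_pos hP) (matEntrySumNorm_pos hA)), matProd_succ]
  exact matEntrySumNorm_mul_le _ _

lemma matNormalize_matProd_mul_matNormalize (n : ℕ) :
    matNormalize (matProd A n) * matNormalize (A (n + 1)) =
      lamSeq A (n + 1) • matNormalize (matProd A (n + 1)) := by
  rcases eq_or_ne (matProd A (n + 1)) 0 with h | h
  · simp [matNormalize, ← matProd_succ, h]
  · simp only [matNormalize, lamSeq, smul_mul_smul_comm, ← matProd_succ, smul_smul,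
      Nat.add_sub_cancel]
    congr 1
    field_simp [(matEntrySumNorm_pos h).ne']

end MatProd

/-- Lemma 3.2: if `P_n/‖P_n‖` converges, then there is a nonzero row
vector `r` with `r·(A_n/‖A_n‖ − λ_n I) → 0`, where the positive reals `λ_n` may be
taken to be `λ_n = ‖P_n‖/(‖P_{n−1}‖·‖A_n‖)`. -/
theorem row_vector_almost_left_eigen_of_converges {d : ℕ}
    (A : ℕ → Matrix (Fin d) (Fin d) ℂ)
    (hA : ∀ n, A n ≠ 0)
    (hP : ∀ n, matProd A n ≠ 0)
    (Q : Matrix (Fin d) (Fin d) ℂ)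
    (hconv : Tendsto (fun n => (matEntrySumNorm (matProd A n))⁻¹ • matProd A n)
      atTop (nhds Q)) :
    ∃ r : Fin d → ℂ, r ≠ 0 ∧
      (∀ n : ℕ, 0 < lamSeq A n) ∧
      Tendsto
        (fun n => r ᵥ* ((matEntrySumNorm (A n))⁻¹ • A n -
          ((lamSeq A n : ℂ) • (1 : Matrix (Fin d) (Fin d) ℂ))))
        atTop (nhds 0) := by
  have hQ : matEntrySumNorm Q = 1 :=
    tendsto_nhds_unique ((continuous_matEntrySumNorm.tendsto Q).comp hconv)
      (tendsto_const_nhds.congr fun n => (matEntrySumNorm_matNormalize (hP n)).symm)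
  obtain ⟨i, hi⟩ : ∃ i, Q i ≠ 0 := Function.ne_iff.mp fun h => by simp [h, matEntrySumNorm] at hQ
  refine ⟨Q i, hi, lamSeq_pos hA hP, ?_⟩
  let _ : NormedRing (Matrix (Fin d) (Fin d) ℂ) := Matrix.linftyOpNormedRing
  let _ : NormedSpace ℝ (Matrix (Fin d) (Fin d) ℂ) := Matrix.linftyOpNormedSpace
  have hB : IsBoundedUnder (· ≤ ·) atTop (norm ∘ fun n => matNormalize (A n)) :=
    isBoundedUnder_of ⟨1, fun n => (linfty_opNorm_le_matEntrySumNorm _).trans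
      (matEntrySumNorm_matNormalize_le_one _)⟩
  have hlam : IsBoundedUnder (· ≤ ·) atTop (norm ∘ lamSeq A) :=
    isBoundedUnder_of_eventually_le (a := 1) <| (eventually_ge_atTop 1).mono fun n hn => by
      obtain ⟨m, rfl⟩ := Nat.exists_eq_add_of_le' hn
      simpa [abs_of_pos (lamSeq_pos hA hP _)] using lamSeq_succ_le_one (hP m) (hA (m + 1))
  have hlim := tendsto_mul_sub_smul_of_mul_eq_smul hconv hB hlam
    matNormalize_matProd_mul_matNormalize
  refine (((continuous_apply i).tendsto 0).comp hlim).congr fun n => ?_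
  simp only [← mul_apply_eq_vecMul, mul_sub, mul_smul_comm, mul_one, Complex.coe_smul,
    matNormalize]
  rfl
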